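/- arXiv:1304.6144 — 3 statements merged into one kernel-verified Lean document; each statement's English description precedes it below -/
import Mathlib

section
/- Assume c > 1. Then for every ε > 0 there exists an integer n₀ ≥ 0 such that for all n ∈ ℤ with |n| ≥ n₀ one has v_{n+1}/v_n ≤ c^{1+ε}. -/
noncomputable section

/-- `φ(x) = x·sin((π/2)·log₂(1+log₂(1+x)))`. -/
noncomputable def phi (x : ℝ) : ℝ :=
  x * Real.sin (Real.pi / 2 * Real.logb 2 (1 + Real.logb 2 (1 + x)))

/-- `ψ(x) = √x·sin((π/2)·log₂(1+log₂(1+x)))`. -/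
noncomputable def psi (x : ℝ) : ℝ :=
  Real.sqrt x * Real.sin (Real.pi / 2 * Real.logb 2 (1 + Real.logb 2 (1 + x)))

/-- `v_n = c^{φ(|n|)}·e^{ψ(|n|)}`. -/
noncomputable def vw (c : ℝ) (n : ℤ) : ℝ :=
  c ^ phi |(n : ℝ)| * Real.exp (psi |(n : ℝ)|)

/-!
Write `v_n = exp (g |n|)` with `g x = log c · φ x + ψ x`. The angle
`θ x = (π/2)·log₂(1 + log₂(1 + x))` grows so slowly that `θ (x+1) - θ x = O(1 / (x log x))`,
hence `φ (x+1) - φ x = sin θ (x+1) + x (sin θ (x+1) - sin θ x)` is at most `1 + O(1 / log x)` in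
absolute value, while `ψ (x+1) - ψ x = O(1 / √x)`. So `|g (x+1) - g x| ≤ log c + o(1)`, which is
eventually below `(1 + ε) log c`; and `|n|`, `|n+1|` are consecutive integers in one order or the other.
-/

open Real Filter Topology

lemma Real.logb_sub_logb_le_div {b a a' : ℝ} (hb : 1 < b) (ha : 0 < a) (ha' : 0 < a') :
    logb b a' - logb b a ≤ (a' - a) / (a * log b) := by
  have hlog : log a' - log a ≤ (a' - a) / a := by
    rw [← log_div ha'.ne' ha.ne', sub_div, div_self ha.ne']
    exact log_le_sub_one_of_pos (div_pos ha' ha)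
  rw [logb, logb, ← sub_div, ← div_div]
  exact div_le_div_of_nonneg_right hlog (log_pos hb).le

def logLogAngle (x : ℝ) : ℝ := π / 2 * logb 2 (1 + logb 2 (1 + x))

lemma phi_eq (x : ℝ) : phi x = x * sin (logLogAngle x) := rfl

lemma psi_eq (x : ℝ) : psi x = √x * sin (logLogAngle x) := rfl

lemma one_le_one_add_logb_two {x : ℝ} (hx : 0 ≤ x) : 1 ≤ 1 + logb 2 (1 + x) := by
  have : 0 ≤ logb 2 (1 + x) := logb_nonneg (by norm_num) (by linarith)
  linarith

-- Each of the two nested `log₂` contributes a factor `1 / log 2` to the constant.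
lemma abs_logLogAngle_add_one_sub_le {x : ℝ} (hx : 0 ≤ x) :
    |logLogAngle (x + 1) - logLogAngle x| ≤
      π / (2 * log 2 ^ 2) / ((1 + x) * (1 + logb 2 (1 + x))) := by
  set u := 1 + logb 2 (1 + x)
  set u' := 1 + logb 2 (1 + (x + 1))
  have hlog2 : 0 < log 2 := log_pos (by norm_num)
  have hu : 1 ≤ u := one_le_one_add_logb_two hx
  have huu' : u ≤ u' := by
    have := logb_le_logb_of_le (b := 2) (by norm_num) (by linarith : (0 : ℝ) < 1 + x)
      (by linarith : 1 + x ≤ 1 + (x + 1))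
    linarith
  have hstep : u' - u ≤ 1 / ((1 + x) * log 2) := by
    have := logb_sub_logb_le_div (by norm_num : (1 : ℝ) < 2) (by linarith : (0 : ℝ) < 1 + x)
      (by linarith : (0 : ℝ) < 1 + (x + 1))
    have h1 : 1 + (x + 1) - (1 + x) = 1 := by ring
    rw [h1] at this
    simp only [u, u']
    linarith
  have hmono : logb 2 u ≤ logb 2 u' := logb_le_logb_of_le (by norm_num) (by linarith) huu'
  have hdiff : logb 2 u' - logb 2 u ≤ (u' - u) / (u * log 2) :=
    logb_sub_logb_le_div (by norm_num) (by linarith) (by linarith)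
  rw [logLogAngle, logLogAngle, ← mul_sub, abs_of_nonneg (by nlinarith [pi_pos])]
  calc π / 2 * (logb 2 u' - logb 2 u)
      ≤ π / 2 * ((1 / ((1 + x) * log 2)) / (u * log 2)) := by gcongr; exact hdiff.trans (by gcongr)
    _ = π / (2 * log 2 ^ 2) / ((1 + x) * u) := by field_simp

lemma abs_mul_sub_mul_le {w w' s s' : ℝ} (hs' : |s'| ≤ 1) :
    |w' * s' - w * s| ≤ |w' - w| + |w| * |s' - s| := by
  calc |w' * s' - w * s| = |(w' - w) * s' + w * (s' - s)| := by ring_nf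
    _ ≤ |w' - w| * |s'| + |w| * |s' - s| := by
        rw [← abs_mul, ← abs_mul]; exact abs_add_le _ _
    _ ≤ |w' - w| + |w| * |s' - s| := by gcongr; exact mul_le_of_le_one_right (abs_nonneg _) hs'

lemma abs_sin_logLogAngle_add_one_sub_le {x : ℝ} (hx : 0 ≤ x) :
    |sin (logLogAngle (x + 1)) - sin (logLogAngle x)| ≤
      π / (2 * log 2 ^ 2) / ((1 + x) * (1 + logb 2 (1 + x))) :=
  (abs_sin_sub_sin_le _ _).trans (abs_logLogAngle_add_one_sub_le hx)

lemma abs_phi_add_one_sub_le {x : ℝ} (hx : 0 ≤ x) :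
    |phi (x + 1) - phi x| ≤ 1 + π / (2 * log 2 ^ 2) / (1 + logb 2 (1 + x)) := by
  have hu := one_le_one_add_logb_two hx
  rw [phi_eq, phi_eq]
  calc _ ≤ |x + 1 - x| + |x| * |sin (logLogAngle (x + 1)) - sin (logLogAngle x)| :=
        abs_mul_sub_mul_le (abs_sin_le_one _)
    _ ≤ 1 + x * (π / (2 * log 2 ^ 2) / ((1 + x) * (1 + logb 2 (1 + x)))) := by
        rw [add_sub_cancel_left, abs_one, abs_of_nonneg hx]
        gcongr; exact abs_sin_logLogAngle_add_one_sub_le hx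
    _ ≤ 1 + π / (2 * log 2 ^ 2) / (1 + logb 2 (1 + x)) := by
        have hK : 0 ≤ π / (2 * log 2 ^ 2) := by positivity
        rw [mul_div_assoc']
        gcongr 1 + ?_
        rw [div_le_div_iff₀ (by positivity) (by positivity)]
        nlinarith [mul_nonneg hK (by linarith : (0 : ℝ) ≤ 1 + logb 2 (1 + x))]

lemma sqrt_add_one_sub_sqrt_le {x : ℝ} (hx : 0 < x) : √(x + 1) - √x ≤ 1 / √x := by
  have hsx : 0 < √x := sqrt_pos.2 hx
  have hmono : √x ≤ √(x + 1) := sqrt_le_sqrt (by linarith)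
  have hprod : (√(x + 1) - √x) * (√(x + 1) + √x) = 1 := by
    nlinarith [sq_sqrt hx.le, sq_sqrt (by linarith : 0 ≤ x + 1)]
  rw [le_div_iff₀ hsx]
  nlinarith

lemma abs_psi_add_one_sub_le {x : ℝ} (hx : 0 < x) :
    |psi (x + 1) - psi x| ≤ (1 + π / (2 * log 2 ^ 2)) / √x := by
  have hu := one_le_one_add_logb_two hx.le
  have hsx : 0 < √x := sqrt_pos.2 hx
  rw [psi_eq, psi_eq]
  calc _ ≤ |√(x + 1) - √x| + |√x| * |sin (logLogAngle (x + 1)) - sin (logLogAngle x)| :=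
        abs_mul_sub_mul_le (abs_sin_le_one _)
    _ ≤ 1 / √x + √x * (π / (2 * log 2 ^ 2) / ((1 + x) * (1 + logb 2 (1 + x)))) := by
        rw [abs_of_nonneg (sub_nonneg.2 (sqrt_le_sqrt (by linarith))), abs_of_pos hsx]
        gcongr
        · exact sqrt_add_one_sub_sqrt_le hx
        · exact abs_sin_logLogAngle_add_one_sub_le hx.le
    _ ≤ 1 / √x + π / (2 * log 2 ^ 2) / √x := by
        gcongr
        have hK : 0 ≤ π / (2 * log 2 ^ 2) := by positivity
        rw [mul_div_assoc', div_le_div_iff₀ (by positivity) hsx, mul_comm, ← mul_assoc,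
          mul_self_sqrt hx.le]
        have : x ≤ (1 + x) * (1 + logb 2 (1 + x)) := by nlinarith
        nlinarith [mul_le_mul_of_nonneg_left this hK]
    _ = (1 + π / (2 * log 2 ^ 2)) / √x := by rw [add_div]

def logVw (c x : ℝ) : ℝ := log c * phi x + psi x

lemma vw_eq_exp_logVw {c : ℝ} (hc : 0 < c) (n : ℤ) : vw c n = exp (logVw c |(n : ℝ)|) := by
  rw [vw, logVw, rpow_def_of_pos hc, exp_add]

lemma abs_logVw_add_one_sub_le {c x : ℝ} (hc : 1 < c) (hx : 0 < x) :
    |logVw c (x + 1) - logVw c x| ≤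
      (1 + π / (2 * log 2 ^ 2) / (1 + logb 2 (1 + x))) * log c
        + (1 + π / (2 * log 2 ^ 2)) / √x := by
  have hlogc : 0 < log c := log_pos hc
  calc |logVw c (x + 1) - logVw c x|
      = |log c * (phi (x + 1) - phi x) + (psi (x + 1) - psi x)| := by rw [logVw, logVw]; ring_nf
    _ ≤ log c * |phi (x + 1) - phi x| + |psi (x + 1) - psi x| := by
        rw [← abs_of_pos hlogc, ← abs_mul, abs_of_pos hlogc]; exact abs_add_le _ _
    _ ≤ _ := by
        rw [mul_comm (log c)]
        gcongr
        · exact abs_phi_add_one_sub_le hx.le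
        · exact abs_psi_add_one_sub_le hx

lemma eventually_abs_logVw_add_one_sub_le {c ε : ℝ} (hc : 1 < c) (hε : 0 < ε) :
    ∀ᶠ x in atTop, |logVw c (x + 1) - logVw c x| ≤ log c * (1 + ε) := by
  have hlogc : 0 < log c := log_pos hc
  have hloglog : Tendsto (fun x : ℝ ↦ 1 + logb 2 (1 + x)) atTop atTop :=
    tendsto_atTop_add_const_left _ 1 <|
      (tendsto_logb_atTop one_lt_two).comp (tendsto_atTop_add_const_left _ 1 tendsto_id)
  have hbound : Tendsto (fun x ↦ (1 + π / (2 * log 2 ^ 2) / (1 + logb 2 (1 + x))) * log c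
      + (1 + π / (2 * log 2 ^ 2)) / √x) atTop (𝓝 ((1 + 0) * log c + 0)) :=
    ((tendsto_const_nhds.add (tendsto_const_nhds.div_atTop hloglog)).mul_const _).add
      (tendsto_const_nhds.div_atTop tendsto_sqrt_atTop)
  have hlt : (1 + 0) * log c + 0 < log c * (1 + ε) := by nlinarith
  filter_upwards [hbound.eventually (gt_mem_nhds hlt), eventually_gt_atTop 0] with x hx hx0
  exact (abs_logVw_add_one_sub_le hc hx0).trans hx.le

lemma abs_intCast_add_one_eq_or (n : ℤ) :
    |(n : ℝ) + 1| = |(n : ℝ)| + 1 ∨ |(n : ℝ)| = |(n : ℝ) + 1| + 1 := by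
  rcases le_or_gt 0 n with hn | hn
  · have hn' : (0 : ℝ) ≤ n := by exact_mod_cast hn
    left; rw [abs_of_nonneg hn', abs_of_nonneg (by linarith)]
  · have hn' : (n : ℝ) ≤ -1 := by exact_mod_cast (show n ≤ -1 by omega)
    right; rw [abs_of_neg (by linarith), abs_of_nonpos (by linarith)]; ring

/-- If `c > 1`, then for every `ε > 0` there exists `n₀ ≥ 0` such that
`v_{n+1}/v_n ≤ c^{1+ε}` for all `n` with `|n| ≥ n₀`. -/
theorem stmt9 (c : ℝ) (hc : 1 < c) :
    ∀ ε : ℝ, 0 < ε → ∃ n₀ : ℤ, 0 ≤ n₀ ∧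
      ∀ n : ℤ, n₀ ≤ |n| → vw c (n + 1) / vw c n ≤ c ^ (1 + ε) := by
  intro ε hε
  obtain ⟨N, hN⟩ := (eventually_abs_logVw_add_one_sub_le hc hε).exists_forall_of_atTop
  refine ⟨max 0 (⌈N⌉ + 1), le_max_left _ _, fun n hn ↦ ?_⟩
  have hnN : N + 1 ≤ |(n : ℝ)| := by
    have hceil : ((⌈N⌉ + 1 : ℤ) : ℝ) ≤ |n| := by exact_mod_cast (le_max_right _ _).trans hn
    push_cast at hceil
    linarith [Int.le_ceil N]
  rw [vw_eq_exp_logVw (by linarith), vw_eq_exp_logVw (by linarith), ← exp_sub,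
    rpow_def_of_pos (by linarith), exp_le_exp, Int.cast_add, Int.cast_one]
  refine (le_abs_self _).trans ?_
  rcases abs_intCast_add_one_eq_or n with h | h
  · rw [h]; exact hN _ (by linarith)
  · rw [h, abs_sub_comm]; exact hN _ (by linarith)
end
end

section
/- For every integer k ≥ 1, setting n_k := 2^{2^{1+4k}−1} − 1 and m_k := 2^{2^{3+4k}−1} − 1, one has n_k ≥ 1, m_k ≥ 1, v_{n_k} = c^{n_k}·e^{√(n_k)}, and v_{m_k} = c^{−m_k}·e^{−√(m_k)} (equivalently v_{m_k}⁻¹ = c^{m_k}·e^{√(m_k)}). -/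
noncomputable section

lemma logb_two_pow (n : ℕ) : Real.logb 2 ((2:ℝ)^n) = n := by
  rw [Real.logb_pow]
  simp [Real.logb_self_eq_one]

lemma vw_aux (c : ℝ) (j : ℕ) (hj : 1 ≤ j) (N : ℤ) (hN : N = 2 ^ (2 ^ j - 1) - 1) :
    1 ≤ N ∧ vw c N = c ^ ((N : ℝ) * Real.sin (Real.pi / 2 * j)) *
      Real.exp (Real.sqrt (N : ℝ) * Real.sin (Real.pi / 2 * j)) := by
  have h1 : (1:ℕ) ≤ 2 ^ j := Nat.one_le_two_pow
  have h2 : (2:ℕ) ≤ 2 ^ j := by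
    calc (2:ℕ) = 2 ^ 1 := by norm_num
    _ ≤ 2 ^ j := Nat.pow_le_pow_right (by norm_num) hj
  have hexp : 1 ≤ 2 ^ j - 1 := by omega
  have hN1 : 1 ≤ N := by
    rw [hN]
    have : (2:ℤ) ^ 1 ≤ 2 ^ (2 ^ j - 1) := pow_le_pow_right₀ (by norm_num) hexp
    simp at this; omega
  have hNR : (N : ℝ) = 2 ^ (2 ^ j - 1 : ℕ) - 1 := by rw [hN]; push_cast; ring
  have habs : |(N : ℝ)| = (N : ℝ) := abs_of_nonneg (by exact_mod_cast (by omega : (0:ℤ) ≤ N))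
  have hlog : Real.logb 2 (1 + (N : ℝ)) = ((2 ^ j - 1 : ℕ) : ℝ) := by
    rw [hNR, show (1:ℝ) + ((2:ℝ) ^ (2 ^ j - 1 : ℕ) - 1) = 2 ^ (2 ^ j - 1 : ℕ) by ring,
      logb_two_pow]
  have hlog2 : Real.logb 2 (1 + Real.logb 2 (1 + (N : ℝ))) = j := by
    rw [hlog, Nat.cast_sub h1]
    push_cast
    rw [show (1:ℝ) + ((2:ℝ) ^ j - 1) = 2 ^ j by ring, logb_two_pow]
  refine ⟨hN1, ?_⟩
  unfold vw phi psi
  rw [habs, hlog2]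

lemma sin1 (k : ℕ) : Real.sin (Real.pi / 2 * ((1 + 4 * k : ℕ) : ℝ)) = 1 := by
  have h : Real.pi / 2 * ((1 + 4 * k : ℕ) : ℝ) = Real.pi / 2 + k * (2 * Real.pi) := by
    push_cast; ring
  rw [h, Real.sin_add_nat_mul_two_pi, Real.sin_pi_div_two]

lemma sin3 (k : ℕ) : Real.sin (Real.pi / 2 * ((3 + 4 * k : ℕ) : ℝ)) = -1 := by
  have h : Real.pi / 2 * ((3 + 4 * k : ℕ) : ℝ)
      = (Real.pi / 2 + Real.pi) + k * (2 * Real.pi) := by push_cast; ring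
  rw [h, Real.sin_add_nat_mul_two_pi, Real.sin_add_pi, Real.sin_pi_div_two]

/-- For every `k ≥ 1`, with `n_k := 2^{2^{1+4k}-1} - 1` and `m_k := 2^{2^{3+4k}-1} - 1`,
one has `n_k ≥ 1`, `m_k ≥ 1`, `v_{n_k} = c^{n_k}·e^{√(n_k)}`, and
`v_{m_k} = c^{-m_k}·e^{-√(m_k)}`. -/
theorem stmt10 (c : ℝ) (hc : 1 ≤ c) :
    ∀ k : ℕ, 1 ≤ k → ∀ nk mk : ℤ,
      nk = 2 ^ (2 ^ (1 + 4 * k) - 1) - 1 →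
      mk = 2 ^ (2 ^ (3 + 4 * k) - 1) - 1 →
      1 ≤ nk ∧ 1 ≤ mk ∧
      vw c nk = c ^ (nk : ℝ) * Real.exp (Real.sqrt (nk : ℝ)) ∧
      vw c mk = c ^ (-(mk : ℝ)) * Real.exp (-Real.sqrt (mk : ℝ)) := by
  intro k hk nk mk hnk hmk
  obtain ⟨hn1, hn2⟩ := vw_aux c (1 + 4 * k) (by omega) nk hnk
  obtain ⟨hm1, hm2⟩ := vw_aux c (3 + 4 * k) (by omega) mk hmk
  rw [sin1 k, mul_one, mul_one] at hn2
  rw [sin3 k] at hm2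
  refine ⟨hn1, hm1, hn2, ?_⟩
  rw [hm2, mul_neg_one, mul_neg_one]
end
end

section
/- Let T be a bounded linear operator on a complex Banach space X and let c > 0 be such that S(T,c) = {0}. If L is a nonzero closed subspace of X with T L ⊆ L, then the spectral radius of the restriction of T to L is at least c. -/
noncomputable section

/-- `S T a` is the set of vectors `x` such that `‖T^N x‖ ≤ M·a^N` for all `N ≥ 0`,
for some constant `M ≥ 0`. -/
def S {X : Type*} [NormedAddCommGroup X] [NormedSpace ℂ X] (T : X →L[ℂ] X) (a : ℝ) : Set X :=
  {x | ∃ M : ℝ, 0 ≤ M ∧ ∀ N : ℕ, ‖(T ^ N) x‖ ≤ M * a ^ N}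

/-- The restriction of a bounded operator `T` to an invariant subspace `L`,
as a bounded operator on `L`. -/
def restrictCLM {X : Type*} [NormedAddCommGroup X] [NormedSpace ℂ X]
    (T : X →L[ℂ] X) (L : Submodule ℂ X) (h : ∀ x ∈ L, T x ∈ L) : L →L[ℂ] L where
  toLinearMap := (T : X →ₗ[ℂ] X).restrict h
  cont := Continuous.subtype_mk (T.continuous.comp continuous_subtype_val) _

/-- If `T` is a bounded operator on a complex Banach space `X` with `S(T,c) = {0}`
for some `c > 0`, and `L` is a nonzero closed `T`-invariant subspace, then the
spectral radius of the restriction of `T` to `L` is at least `c`. -/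
theorem stmt19 {X : Type*} [NormedAddCommGroup X] [NormedSpace ℂ X] [CompleteSpace X]
    (T : X →L[ℂ] X) (c : ℝ) (hc : 0 < c) (hS : S T c = {0})
    (L : Submodule ℂ X) (hLc : IsClosed (L : Set X)) (hL : L ≠ ⊥)
    (hinv : ∀ x ∈ L, T x ∈ L) :
    ENNReal.ofReal c ≤ spectralRadius ℂ (restrictCLM T L hinv) := by
  by_contra hlt
  push_neg at hlt
  haveI : CompleteSpace L := hLc.completeSpace_coe
  set A := restrictCLM T L hinv with hA
  have key : ∀ (n : ℕ) (y : L), ((A ^ n) y : X) = (T ^ n) (y : X) := by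
    intro n
    induction n with
    | zero => intro y; simp
    | succ k ih =>
      intro y
      rw [pow_succ, pow_succ]
      simp only [ContinuousLinearMap.mul_apply]
      rw [ih (A y)]
      rfl
  obtain ⟨x, hxL, hx0⟩ := Submodule.exists_mem_ne_zero_of_ne_bot hL
  have htend := spectrum.pow_norm_pow_one_div_tendsto_nhds_spectralRadius A
  have hev : ∀ᶠ n : ℕ in Filter.atTop,
      ENNReal.ofReal (‖A ^ n‖ ^ (1 / (n : ℝ))) < ENNReal.ofReal c :=
    htend.eventually_lt_const hlt
  obtain ⟨N₀, hN₀⟩ := Filter.eventually_atTop.mp hev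
  -- for n ≥ max N₀ 1, ‖A ^ n‖ < c ^ n
  have hbound : ∀ n : ℕ, N₀ ≤ n → 1 ≤ n → ‖A ^ n‖ ≤ c ^ n := by
    intro n hn h1
    have h := hN₀ n hn
    have hnpos : (0 : ℝ) < n := by exact_mod_cast h1
    have hlt' : ‖A ^ n‖ ^ (1 / (n : ℝ)) < c := by
      have := (ENNReal.ofReal_lt_ofReal_iff hc).mp h
      exact this
    have hrpow : ((‖A ^ n‖ ^ (1 / (n : ℝ))) ^ (n : ℕ)) < c ^ n := by
      exact pow_lt_pow_left₀ hlt' (Real.rpow_nonneg (norm_nonneg (A ^ n)) (1 / (n:ℝ))) (by omega)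
    have heq : (‖A ^ n‖ ^ (1 / (n : ℝ))) ^ (n : ℕ) = ‖A ^ n‖ := by
      rw [← Real.rpow_natCast (‖A ^ n‖ ^ (1 / (n : ℝ))) n,
        ← Real.rpow_mul (norm_nonneg (A ^ n)),
        one_div_mul_cancel (ne_of_gt hnpos), Real.rpow_one]
    linarith [heq ▸ hrpow]
  -- show x ∈ S T c
  set M0 : ℝ := ∑ n ∈ Finset.range N₀, ‖(T ^ n) x‖ / c ^ n with hM0
  have hM0nonneg : 0 ≤ M0 := Finset.sum_nonneg fun n _ =>
    div_nonneg (norm_nonneg _) (pow_nonneg hc.le n)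
  have hxS : x ∈ S T c := by
    refine ⟨M0 + ‖x‖, by positivity, fun n => ?_⟩
    by_cases hn : n < N₀
    · have hterm : ‖(T ^ n) x‖ / c ^ n ≤ M0 :=
        Finset.single_le_sum (f := fun n => ‖(T ^ n) x‖ / c ^ n)
          (fun i _ => div_nonneg (norm_nonneg _) (pow_nonneg hc.le i))
          (Finset.mem_range.mpr hn)
      have := (div_le_iff₀ (pow_pos hc n)).mp hterm
      have hxn : 0 ≤ ‖x‖ * c ^ n := by positivity
      nlinarith [pow_pos hc n]
    · push_neg at hn
      rcases Nat.eq_zero_or_pos n with h0 | h1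
      · subst h0
        simp only [pow_zero, pow_zero, ContinuousLinearMap.one_apply, mul_one]
        linarith
      · have hAle := hbound n hn h1
        have : ‖(T ^ n) x‖ = ‖(A ^ n) ⟨x, hxL⟩‖ := by
          rw [show ‖(A ^ n) (⟨x, hxL⟩ : L)‖ = ‖((A ^ n) (⟨x, hxL⟩ : L) : X)‖ from rfl,
            key n ⟨x, hxL⟩]
        rw [this]
        calc ‖(A ^ n) ⟨x, hxL⟩‖ ≤ ‖A ^ n‖ * ‖(⟨x, hxL⟩ : L)‖ :=
              ContinuousLinearMap.le_opNorm _ _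
          _ ≤ c ^ n * ‖x‖ := by
              have : ‖(⟨x, hxL⟩ : L)‖ = ‖x‖ := rfl
              rw [this]
              exact mul_le_mul_of_nonneg_right hAle (norm_nonneg _)
          _ ≤ (M0 + ‖x‖) * c ^ n := by
              rw [mul_comm]
              have := pow_pos hc n
              nlinarith
  rw [hS] at hxS
  exact hx0 hxS
end
end
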